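/- arXiv:2605.13102 — 4 statements merged into one kernel-verified Lean document; each statement's English description precedes it below -/
import Mathlib

section
/- Let f : ℝ → ℝ, x : ℝ, and L : ℝ. Then f has derivative L at x if and only if for every nonzero infinitesimal hyperreal dx, the difference quotient (f*(x + dx) − f(x)) / dx is infinitely close to L, where f* is the natural extension of f. -/
open Hyperreal Filter Topology

/-- The natural extension `f* : ℝ* → ℝ*` of `f : ℝ → ℝ`, given by `Filter.Germ.map f`. -/
noncomputable def Hyperreal.extension (f : ℝ → ℝ) : ℝ* → ℝ* :=
  Filter.Germ.map f

private noncomputable def og (u : ℕ → ℝ) : ℝ* := (↑u : Filter.Germ (hyperfilter ℕ : Filter ℕ) ℝ)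

private theorem quot_eq (f : ℝ → ℝ) (x L : ℝ) (u : ℕ → ℝ) :
    |(Hyperreal.extension f ((x : ℝ*) + og u) - ((f x : ℝ) : ℝ*)) / og u - (L : ℝ*)|
      = og (fun n => |(f (x + u n) - f x) / u n - L|) := by
  have hx : (x : ℝ*) = og (fun _ => x) := rfl
  have hfx : ((f x : ℝ) : ℝ*) = og (fun _ => f x) := rfl
  have hL : ((L : ℝ) : ℝ*) = og (fun _ => L) := rfl
  rw [hx, hfx, hL]
  show |(Filter.Germ.map f _ - _) / _ - _| = _
  rfl

private theorem og_lt (u : ℕ → ℝ) (r : ℝ) :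
    og u < (r : ℝ*) ↔ ∀ᶠ n in (hyperfilter ℕ : Filter ℕ), u n < r :=
  Filter.Germ.coe_lt

private theorem og_abs (u : ℕ → ℝ) : |og u| = og (fun n => |u n|) := by
  rfl

/-- Nonstandard characterization of the derivative: `f` has derivative `L` at `x`
iff for every nonzero infinitesimal `dx`, the difference quotient
`(f*(x + dx) − f x) / dx` is infinitely close to `L`. -/
theorem hasDerivAt_iff_difference_quotient_infinitely_close
    (f : ℝ → ℝ) (x L : ℝ) :
    HasDerivAt f L x ↔
      ∀ dx : ℝ*, dx ≠ 0 → (∀ r : ℝ, 0 < r → |dx| < (r : ℝ*)) →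
        ∀ r : ℝ, 0 < r →
          |(Hyperreal.extension f ((x : ℝ*) + dx) - ((f x : ℝ) : ℝ*)) / dx - (L : ℝ*)|
            < (r : ℝ*) := by
  rw [hasDerivAt_iff_tendsto_slope_zero]
  constructor
  · intro h dx hdx hinf r hr
    induction dx using Filter.Germ.inductionOn with
    | h u =>
      have hu0 : ∀ᶠ n in (hyperfilter ℕ : Filter ℕ), u n ≠ 0 := by
        rw [Ultrafilter.eventually_not]
        intro hcon
        exact hdx (Filter.Germ.coe_eq.2 hcon)
      have hut : Tendsto u (hyperfilter ℕ : Filter ℕ) (𝓝[≠] (0:ℝ)) := by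
        rw [tendsto_nhdsWithin_iff]
        constructor
        · rw [Metric.tendsto_nhds]
          intro e he
          have h1 : og (fun n => |u n|) < (e : ℝ*) := by
            rw [← og_abs]; exact hinf e he
          rw [og_lt] at h1
          filter_upwards [h1] with n hn
          simpa [Real.dist_eq] using hn
        · filter_upwards [hu0] with n hn using hn
      have h2 := (h.comp hut).eventually (Metric.ball_mem_nhds L hr)
      show |(Hyperreal.extension f ((x : ℝ*) + og u) - ((f x : ℝ) : ℝ*)) / og u - (L : ℝ*)|
          < (r : ℝ*)
      rw [quot_eq, og_lt]
      filter_upwards [h2] with n hn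
      simp only [Function.comp, Metric.mem_ball, Real.dist_eq, smul_eq_mul] at hn
      rwa [inv_mul_eq_div] at hn
  · intro H
    rw [Metric.tendsto_nhdsWithin_nhds]
    by_contra hcon
    push_neg at hcon
    obtain ⟨e, he, hδ⟩ := hcon
    have hsel : ∀ n : ℕ, ∃ t : ℝ, t ≠ 0 ∧ |t| < 1 / (n + 1) ∧
        e ≤ |t⁻¹ * (f (x + t) - f x) - L| := by
      intro n
      obtain ⟨t, ht0, htd, hte⟩ := hδ (1 / (n + 1)) (by positivity)
      refine ⟨t, ht0, ?_, ?_⟩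
      · simpa [Real.dist_eq] using htd
      · simpa [Real.dist_eq, smul_eq_mul] using hte
    choose u hu0 husmall hubig using hsel
    have hdx : og u ≠ 0 := by
      intro hzero
      have : ∀ᶠ n in (hyperfilter ℕ : Filter ℕ), u n = 0 := Filter.Germ.coe_eq.1 hzero
      obtain ⟨n, hn⟩ := this.exists
      exact hu0 n hn
    have hinf : ∀ r : ℝ, 0 < r → |og u| < (r : ℝ*) := by
      intro r hr
      rw [og_abs, og_lt]
      have : ∀ᶠ n in atTop, |u n| < r := by
        obtain ⟨N, hN⟩ := exists_nat_gt (1 / r)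
        filter_upwards [eventually_ge_atTop N] with n hn
        refine (husmall n).trans_le ?_
        have h4 : (1:ℝ)/r ≤ (n:ℝ) + 1 := by
          have hn' : (N:ℝ) ≤ n := by exact_mod_cast hn
          linarith
        rw [div_le_iff₀ (by positivity)]
        calc (1:ℝ) = r * (1/r) := by field_simp
          _ ≤ r * ((n:ℝ)+1) := mul_le_mul_of_nonneg_left h4 hr.le
      exact this.filter_mono Nat.hyperfilter_le_atTop
    have h3 := H (og u) hdx hinf e he
    rw [quot_eq, og_lt] at h3
    obtain ⟨n, hn⟩ := h3.exists
    have := hubig n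
    rw [inv_mul_eq_div] at this
    linarith
end

section
/- Let f : ℝ → ℝ be differentiable on all of ℝ, let x be a real number, and let h be a hyperreal. Then there exists a hyperreal θ with 0 ≤ θ and θ ≤ 1 such that f*(x + h) − f(x) = h · (deriv f)*(x + θ·h), where f* and (deriv f)* are the natural extensions of f and of its derivative. (This answers, in the hyperreal model, Felix Klein's challenge to prove the mean-value theorem f(x+h) − f(x) = h·f′(x+θh) with 0 ≤ θ ≤ 1 in a non-Archimedean system, in particular for infinitesimal increments h.) -/
open Hyperreal

/-! Choosing a real `θ` for each coordinate `h n` of a representative of `h` (the real mean value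
theorem) and taking the germ of these choices gives the hyperreal `θ`: each of `0 ≤ θ`, `θ ≤ 1`
and the mean value identity then holds coordinatewise, hence in the ultrapower. -/

theorem exists_mem_Icc_sub_eq_mul_deriv {f : ℝ → ℝ} (hf : Differentiable ℝ f) (x t : ℝ) :
    ∃ θ ∈ Set.Icc (0 : ℝ) 1, f (x + t) - f x = t * deriv f (x + θ * t) := by
  -- The mean value theorem for `s ↦ f (x + s * t)` on `[0, 1]` needs no case split on the sign of `t`.
  have hg : ∀ s, HasDerivAt (fun s => f (x + s * t)) (t * deriv f (x + s * t)) s := fun s => by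
    have := (hf (x + s * t)).hasDerivAt.comp s (((hasDerivAt_id' s).mul_const t).const_add x)
    rwa [one_mul, mul_comm] at this
  obtain ⟨θ, hθ, hslope⟩ := exists_hasDerivAt_eq_slope (fun s => f (x + s * t))
    (fun s => t * deriv f (x + s * t)) zero_lt_one
    (fun s _ => (hg s).continuousAt.continuousWithinAt) (fun s _ => hg s)
  exact ⟨θ, Set.Ioo_subset_Icc_self hθ, by simpa using hslope.symm⟩

/-- Klein's challenge in the hyperreal model: the mean value theorem
`f*(x + h) − f(x) = h · (f′)*(x + θ·h)` with `0 ≤ θ ≤ 1` holds for every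
hyperreal increment `h` (in particular for infinitesimal `h`). -/
theorem hyperreal_mean_value (f : ℝ → ℝ) (hf : Differentiable ℝ f)
    (x : ℝ) (h : ℝ*) :
    ∃ θ : ℝ*, 0 ≤ θ ∧ θ ≤ 1 ∧
      Hyperreal.extension f ((x : ℝ*) + h) - ((f x : ℝ) : ℝ*)
        = h * Hyperreal.extension (deriv f) ((x : ℝ*) + θ * h) := by
  choose θ hθ hmvt using exists_mem_Icc_sub_eq_mul_deriv hf x
  obtain ⟨u, rfl⟩ := ofSeq_surjective h
  refine ⟨ofSeq (θ ∘ u), ?_, ?_, ?_⟩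
  · exact Filter.Germ.coe_nonneg.2 <| .of_forall fun n => (hθ (u n)).1
  · exact Filter.Germ.coe_le.2 <| .of_forall fun n => (hθ (u n)).2
  · exact congrArg ofSeq <| funext fun n => hmvt (u n)
end

section
/- Let F : ℝ → ℝ be continuous, let a be a real number, and let ε > 0 be a fixed real number. Then (1/2)·∫_{a−ε}^{a+ε} F(μ) · α / (α² + (μ − a)²) dμ tends to (π/2)·F(a) as α → 0⁺. (This is the sifting property of Cauchy's infinitesimal delta function, which Cauchy wrote, for infinitely small α and ε, as (1/2)∫_{a−ε}^{a+ε} F(μ) α dμ/(α² + (μ−a)²) = (π/2) F(a).) -/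
open Real Filter intervalIntegral

lemma cauchy_kernel_integral (a ε : ℝ) {α : ℝ} (hα : 0 < α) :
    (∫ μ in (a - ε)..(a + ε), α / (α ^ 2 + (μ - a) ^ 2)) = 2 * arctan (ε / α) := by
  have h1 : (∫ μ in (a - ε)..(a + ε), α / (α ^ 2 + (μ - a) ^ 2))
      = ∫ x in (-ε)..ε, α / (α ^ 2 + x ^ 2) := by
    have := intervalIntegral.integral_comp_sub_right
      (a := a - ε) (b := a + ε) (fun x => α / (α ^ 2 + x ^ 2)) a
    simpa using this
  have h2 : ∀ x : ℝ, α / (α ^ 2 + x ^ 2) = (1 / α) * (1 + (x / α) ^ 2)⁻¹ := by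
    intro x
    rw [div_pow]
    field_simp
  rw [h1]
  simp_rw [h2]
  rw [intervalIntegral.integral_const_mul]
  have h3 : (∫ x in (-ε)..ε, (fun t => (1 + t ^ 2)⁻¹) (x / α))
      = α • ∫ t in (-ε / α)..(ε / α), (1 + t ^ 2)⁻¹ :=
    intervalIntegral.integral_comp_div (fun t => (1 + t ^ 2)⁻¹) (ne_of_gt hα)
  rw [h3, integral_inv_one_add_sq, smul_eq_mul,
    show -ε / α = -(ε / α) by ring, arctan_neg]
  field_simp
  ring

/-- Sifting property of Cauchy's infinitesimal delta function: for continuous `F`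
and fixed `ε > 0`, `(1/2) ∫_{a−ε}^{a+ε} F(μ) α / (α² + (μ−a)²) dμ → (π/2) F(a)`
as `α → 0⁺`. -/
theorem cauchy_delta_sifting (F : ℝ → ℝ) (hF : Continuous F) (a ε : ℝ) (hε : 0 < ε) :
    Tendsto
      (fun α : ℝ =>
        (1 / 2) * ∫ μ in (a - ε)..(a + ε), F μ * α / (α ^ 2 + (μ - a) ^ 2))
      (nhdsWithin 0 (Set.Ioi 0)) (nhds (π / 2 * F a)) := by
  set s : Set ℝ := Set.Icc (a - ε) (a + ε) with hs_def
  set φ : ℝ → ℝ → ℝ := fun α x => (1 / π) * (α / (α ^ 2 + (x - a) ^ 2)) with hφ_def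
  have hle : a - ε ≤ a + ε := by linarith
  have has : a ∈ s := ⟨by linarith, by linarith⟩
  -- key convergence via peak functions
  have key : Tendsto (fun α : ℝ => ∫ x in s, φ α x • F x) (nhdsWithin 0 (Set.Ioi 0))
      (nhds (F a)) := by
    apply tendsto_setIntegral_peak_smul_of_integrableOn_of_tendsto
      (x₀ := a) (t := s) measurableSet_Icc measurableSet_Icc subset_rfl self_mem_nhdsWithin
      (measure_Icc_lt_top.ne)
    · -- nonnegativity
      filter_upwards [self_mem_nhdsWithin] with α (hα : 0 < α) x _
      have : 0 < α ^ 2 + (x - a) ^ 2 := by positivity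
      positivity
    · -- uniform convergence to 0 away from a
      intro u hu hau
      obtain ⟨η, hη, hball⟩ := Metric.isOpen_iff.1 hu a hau
      rw [Metric.tendstoUniformlyOn_iff]
      intro δ hδ
      have hηδ : 0 < δ * η ^ 2 * π := by positivity
      filter_upwards [Ioo_mem_nhdsGT_of_mem (Set.mem_Ico.2 ⟨le_rfl, hηδ⟩)] with α hα x hx
      obtain ⟨hα0, hαδ⟩ := hα
      have hxη : η ≤ |x - a| := by
        by_contra h
        push_neg at h
        exact hx.2 (hball (by simpa [Real.dist_eq] using h))
      have hx2 : η ^ 2 ≤ (x - a) ^ 2 := by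
        calc η ^ 2 ≤ |x - a| ^ 2 := by
              apply pow_le_pow_left₀ hη.le hxη
          _ = (x - a) ^ 2 := sq_abs _
      have hpos : 0 < α ^ 2 + (x - a) ^ 2 := by positivity
      have hb : φ α x ≤ α / (π * η ^ 2) := by
        rw [hφ_def]
        simp only
        rw [one_div, inv_mul_eq_div, div_div]
        apply div_le_div_of_nonneg_left hα0.le (by positivity)
        nlinarith [sq_nonneg α, Real.pi_pos, mul_le_mul_of_nonneg_right hx2 Real.pi_pos.le]
      have hnn : 0 ≤ φ α x := by
        rw [hφ_def]
        positivity
      rw [Pi.zero_apply, Real.dist_eq, abs_sub_comm, sub_zero, abs_of_nonneg hnn]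
      calc φ α x ≤ α / (π * η ^ 2) := hb
        _ < δ := by
            rw [div_lt_iff₀ (by positivity)]
            nlinarith
    · -- integral tends to 1
      have heq : ∀ᶠ α in nhdsWithin (0:ℝ) (Set.Ioi 0),
          (∫ x in s, φ α x) = (2 / π) * arctan (ε / α) := by
        filter_upwards [self_mem_nhdsWithin] with α (hα : 0 < α)
        rw [hs_def, MeasureTheory.integral_Icc_eq_integral_Ioc,
          ← intervalIntegral.integral_of_le hle]
        rw [hφ_def]
        simp only
        rw [intervalIntegral.integral_const_mul, cauchy_kernel_integral a ε hα]
        ring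
      rw [tendsto_congr' heq]
      have h1 : Tendsto (fun α : ℝ => ε / α) (nhdsWithin 0 (Set.Ioi 0)) atTop := by
        have := tendsto_inv_nhdsGT_zero.const_mul_atTop hε
        simpa [div_eq_mul_inv] using this
      have h2 : Tendsto (fun α : ℝ => arctan (ε / α)) (nhdsWithin 0 (Set.Ioi 0))
          (nhds (π / 2)) :=
        (tendsto_nhds_of_tendsto_nhdsWithin tendsto_arctan_atTop).comp h1
      have h3 := h2.const_mul (2 / π)
      have hπ : (π:ℝ) ≠ 0 := Real.pi_ne_zero
      have : 2 / π * (π / 2) = 1 := by field_simp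
      rwa [this] at h3
    · -- a.e. strong measurability
      filter_upwards [self_mem_nhdsWithin] with α (hα : 0 < α)
      apply Continuous.aestronglyMeasurable
      apply Continuous.mul continuous_const
      apply Continuous.div continuous_const
      · exact continuous_const.add (((continuous_id.sub continuous_const).pow 2))
      · intro x
        have : 0 < α ^ 2 + (x - a) ^ 2 := by positivity
        exact ne_of_gt this
    · exact hF.integrableOn_Icc
    · exact (hF.tendsto a).mono_left nhdsWithin_le_nhds
  -- conclude
  have hkey := key.const_mul (π / 2)
  refine hkey.congr' ?_
  filter_upwards [self_mem_nhdsWithin] with α (hα : 0 < α)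
  rw [intervalIntegral.integral_of_le hle, ← MeasureTheory.integral_Icc_eq_integral_Ioc,
    ← hs_def, ← MeasureTheory.integral_const_mul, ← MeasureTheory.integral_const_mul]
  apply MeasureTheory.setIntegral_congr_fun measurableSet_Icc
  intro x _
  rw [hφ_def]
  simp only [smul_eq_mul]
  have hπ : (π:ℝ) ≠ 0 := Real.pi_ne_zero
  have : 0 < α ^ 2 + (x - a) ^ 2 := by positivity
  field_simp
end

section
/- Let f : ℝ → ℝ be bounded and continuous and let a be a real number. Then ∫_ℝ f(x) · (1/π) · α / (α² + (x − a)²) dx tends to f(a) as α → 0⁺. -/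
open Real Filter MeasureTheory

/-- Weak convergence of the Cauchy densities to the Dirac delta at `a`: for `f`
bounded and continuous, `∫ f(x) (1/π) α / (α² + (x−a)²) dx → f(a)` as `α → 0⁺`. -/
theorem cauchy_density_tendsto_delta (f : ℝ → ℝ) (hf : Continuous f)
    (M : ℝ) (hM : ∀ x : ℝ, |f x| ≤ M) (a : ℝ) :
    Tendsto
      (fun α : ℝ => ∫ x : ℝ, f x * (1 / π) * α / (α ^ 2 + (x - a) ^ 2))
      (nhdsWithin 0 (Set.Ioi 0)) (nhds (f a)) := by
  have hpos : ∀ t : ℝ, (0:ℝ) < 1 + t ^ 2 := fun t => by positivity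
  have hπ : (0:ℝ) < π := pi_pos
  have hcont : ∀ α : ℝ, Continuous fun t : ℝ => f (a + α * t) * ((1/π) / (1 + t ^ 2)) := by
    intro α
    exact (hf.comp (by continuity)).mul
      (continuous_const.div (by continuity) (fun t => (hpos t).ne'))
  have key : Tendsto (fun α : ℝ => ∫ t : ℝ, f (a + α * t) * ((1/π) / (1 + t ^ 2)))
      (nhdsWithin 0 (Set.Ioi 0)) (nhds (∫ t : ℝ, f a * ((1/π) / (1 + t ^ 2)))) := by
    apply tendsto_integral_filter_of_dominated_convergence
      (bound := fun t : ℝ => M * ((1/π) / (1 + t ^ 2)))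
    · exact Eventually.of_forall fun α => (hcont α).aestronglyMeasurable
    · refine Eventually.of_forall fun α => ae_of_all _ fun t => ?_
      have h1 : (0:ℝ) ≤ (1/π) / (1 + t ^ 2) := by positivity
      rw [Real.norm_eq_abs, abs_mul, abs_of_nonneg h1]
      exact mul_le_mul_of_nonneg_right (hM _) h1
    · have : Integrable (fun t : ℝ => (1 + t ^ 2)⁻¹) := integrable_inv_one_add_sq
      have := (this.const_mul (M * (1/π)))
      refine this.congr (ae_of_all _ fun t => ?_)
      simp only [one_div]; ring
    · refine ae_of_all _ fun t => ?_
      have h1 : Tendsto (fun α : ℝ => f (a + α * t)) (nhds 0) (nhds (f a)) := by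
        have : Tendsto (fun α : ℝ => a + α * t) (nhds 0) (nhds a) := by
          have : Continuous fun α : ℝ => a + α * t := by continuity
          simpa using this.tendsto (0:ℝ)
        exact (hf.tendsto a).comp this
      exact ((h1.mono_left nhdsWithin_le_nhds).mul_const _)
  have hval : (∫ t : ℝ, f a * ((1/π) / (1 + t ^ 2))) = f a := by
    have : (∫ t : ℝ, f a * ((1/π) / (1 + t ^ 2)))
        = (f a * (1/π)) * ∫ t : ℝ, 1 / (1 + t ^ 2) := by
      rw [← integral_const_mul]
      congr 1; ext t; ring
    simp only [one_div] at this ⊢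
    rw [this, integral_univ_inv_one_add_sq]
    field_simp
  rw [hval] at key
  refine key.congr' ?_
  filter_upwards [self_mem_nhdsWithin] with α (hα : (0:ℝ) < α)
  have hα' : α ≠ 0 := hα.ne'
  have h1 : (∫ x : ℝ, f x * (1 / π) * α / (α ^ 2 + (x - a) ^ 2))
      = ∫ x : ℝ, f (x + a) * (1 / π) * α / (α ^ 2 + x ^ 2) := by
    rw [← integral_add_right_eq_self (fun x : ℝ => f x * (1 / π) * α / (α ^ 2 + (x - a) ^ 2)) a]
    simp
  have h2 : (∫ x : ℝ, f (x + a) * (1 / π) * α / (α ^ 2 + x ^ 2))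
      = |α| • ∫ x : ℝ, f (α * x + a) * (1 / π) * α / (α ^ 2 + (α * x) ^ 2) := by
    rw [MeasureTheory.Measure.integral_comp_mul_left
      (fun x : ℝ => f (x + a) * (1 / π) * α / (α ^ 2 + x ^ 2)) α, abs_inv, smul_smul,
      mul_inv_cancel₀ (abs_ne_zero.mpr hα'), one_smul]
  rw [h1, h2, abs_of_pos hα, smul_eq_mul, ← integral_const_mul]
  congr 1; ext t
  have ht : (0:ℝ) < α ^ 2 + (α * t) ^ 2 := by positivity
  rw [add_comm (α * t) a]
  field_simp
end
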